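/- Combined correctness of the recursive solve: let A = [[A₁, a₁b₁*],[b₂a₂*, A₂]] with A₁, A₂ invertible, c = (A₁*)^{-1} a₂, γ = c* a₁, d = A₂^{-1} b₂, δ = γ (b₁* d), δ ≠ 1. Given z = (z₁, z₂), define ŷ₂ = z₂ - (c* z₁) b₂, x̂₂ = A₂^{-1} ŷ₂, x₂ = x̂₂ + γ (b₁* x̂₂)/(1-δ) d, and x₁ = A₁^{-1}(z₁ - (b₁* x₂) a₁). Then A (x₁, x₂) = (z₁, z₂). -/
import Mathlib


open Matrix

theorem recursive_solve_correct
    {m p : Type*} [Fintype m] [Fintype p] [DecidableEq m] [DecidableEq p]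
    (A₁ : Matrix m m ℝ) (A₂ : Matrix p p ℝ)
    (hA₁ : IsUnit A₁) (hA₂ : IsUnit A₂)
    (a₁ a₂ : m → ℝ) (b₁ b₂ : p → ℝ)
    (c : m → ℝ) (hc : c = (A₁ᵀ)⁻¹.mulVec a₂)
    (γ : ℝ) (hγ : γ = c ⬝ᵥ a₁)
    (d : p → ℝ) (hd : d = A₂⁻¹.mulVec b₂)
    (δ : ℝ) (hδ : δ = γ * (b₁ ⬝ᵥ d)) (hδ1 : δ ≠ 1)
    (z₁ : m → ℝ) (z₂ : p → ℝ)
    (yhat₂ : p → ℝ) (hy : yhat₂ = z₂ - (c ⬝ᵥ z₁) • b₂)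
    (xhat₂ : p → ℝ) (hxhat : xhat₂ = A₂⁻¹.mulVec yhat₂)
    (x₂ : p → ℝ) (hx₂ : x₂ = xhat₂ + (γ * (b₁ ⬝ᵥ xhat₂) / (1 - δ)) • d)
    (x₁ : m → ℝ) (hx₁ : x₁ = A₁⁻¹.mulVec (z₁ - (b₁ ⬝ᵥ x₂) • a₁)) :
    (Matrix.fromBlocks A₁ (Matrix.vecMulVec a₁ b₁)
        (Matrix.vecMulVec b₂ a₂) A₂).mulVec (Sum.elim x₁ x₂) =
      Sum.elim z₁ z₂ := by
  have hdet₁ : IsUnit A₁.det := (Matrix.isUnit_iff_isUnit_det _).1 hA₁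
  have hdet₂ : IsUnit A₂.det := (Matrix.isUnit_iff_isUnit_det _).1 hA₂
  have hmv₁ : ∀ v, A₁.mulVec (A₁⁻¹.mulVec v) = v := by
    intro v; rw [Matrix.mulVec_mulVec, Matrix.mul_nonsing_inv _ hdet₁, Matrix.one_mulVec]
  have hmv₂ : ∀ v, A₂.mulVec (A₂⁻¹.mulVec v) = v := by
    intro v; rw [Matrix.mulVec_mulVec, Matrix.mul_nonsing_inv _ hdet₂, Matrix.one_mulVec]
  have hvmv₁ : ∀ (x : p → ℝ), (Matrix.vecMulVec a₁ b₁).mulVec x = (b₁ ⬝ᵥ x) • a₁ := by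
    intro x; ext i
    simp only [Matrix.vecMulVec, Matrix.mulVec, dotProduct, Matrix.of_apply,
      Pi.smul_apply, smul_eq_mul, Finset.mul_sum]
    rw [Finset.sum_mul]
    exact Finset.sum_congr rfl fun j _ => by ring
  have hvmv₂ : ∀ (x : m → ℝ), (Matrix.vecMulVec b₂ a₂).mulVec x = (a₂ ⬝ᵥ x) • b₂ := by
    intro x; ext i
    simp only [Matrix.vecMulVec, Matrix.mulVec, dotProduct, Matrix.of_apply,
      Pi.smul_apply, smul_eq_mul, Finset.mul_sum]
    rw [Finset.sum_mul]
    exact Finset.sum_congr rfl fun j _ => by ring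
  have hcdot : ∀ v, a₂ ⬝ᵥ A₁⁻¹.mulVec v = c ⬝ᵥ v := by
    intro v
    rw [Matrix.dotProduct_mulVec, ← Matrix.mulVec_transpose,
      Matrix.transpose_nonsing_inv, ← hc]
  set s : ℝ := γ * (b₁ ⬝ᵥ xhat₂) / (1 - δ) with hs
  have hδ1' : 1 - δ ≠ 0 := sub_ne_zero.2 fun h => hδ1 h.symm
  have h1 : s * (1 - δ) = γ * (b₁ ⬝ᵥ xhat₂) := by
    rw [hs]; field_simp
  have hb₁x₂ : γ * (b₁ ⬝ᵥ x₂) = s := by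
    rw [hx₂]
    have h2 : γ * (b₁ ⬝ᵥ (xhat₂ + s • d)) = γ * (b₁ ⬝ᵥ xhat₂) + s * δ := by
      rw [hδ]; simp [dotProduct_add, dotProduct_smul]; ring
    rw [h2, ← h1]; ring
  have hax₁ : a₂ ⬝ᵥ x₁ = c ⬝ᵥ z₁ - (b₁ ⬝ᵥ x₂) * γ := by
    rw [hx₁, hcdot]
    simp [dotProduct_sub, dotProduct_smul, hγ, mul_comm]
  have e1 : A₁.mulVec x₁ + (Matrix.vecMulVec a₁ b₁).mulVec x₂ = z₁ := by
    rw [hvmv₁, hx₁, hmv₁]; abel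
  have e2 : (Matrix.vecMulVec b₂ a₂).mulVec x₁ + A₂.mulVec x₂ = z₂ := by
    have hA₂x₂ : A₂.mulVec x₂ = yhat₂ + s • b₂ := by
      rw [hx₂, Matrix.mulVec_add, Matrix.mulVec_smul, hxhat, hmv₂, hd, hmv₂]
    rw [hvmv₂, hax₁, hA₂x₂, hy]
    ext i
    have hsx : b₁ ⬝ᵥ x₂ * γ = s := by rw [mul_comm]; exact hb₁x₂
    simp only [Pi.add_apply, Pi.sub_apply, Pi.smul_apply, smul_eq_mul, hsx]
    ring
  rw [Matrix.fromBlocks_mulVec]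
  simp only [Sum.elim_comp_inl, Sum.elim_comp_inr, e1, e2]
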